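/- arXiv:1901.00719 — 2 statements merged into one kernel-verified Lean document; each statement's English description precedes it below -/
import Mathlib

section
/- Let V be a finite-dimensional real inner product space and let Δ ⊆ V be a finite linearly independent set such that ⟨α, β⟩ ≤ 0 for all distinct α, β ∈ Δ. For a subset S ⊆ Δ, say that λ ∈ V is of type S if λ can be written as λ = λ₊ − λ₋, where λ₊ ∈ V satisfies ⟨λ₊, α⟩ = 0 for every α ∈ S and ⟨λ₊, β⟩ > 0 for every β ∈ Δ \ S, and λ₋ is a nonnegative real linear combination of elements of S. Then every λ ∈ V is of type S for exactly one subset S ⊆ Δ (so V is the disjoint union, over all subsets S ⊆ Δ, of the sets of elements of type S). -/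
/-!
Write `K` for the cone of nonnegative combinations of `Δ`; it is closed because `Δ` is linearly
independent. If `m` is the point of `K` nearest to `-l`, then `p = l + m` pairs nonnegatively with
`K` and `⟪p, m⟫ = 0` (Moreau decomposition). Such a decomposition `l = p - m` is unique, since
`‖p₁ - p₂‖² = ⟪p₁ - p₂, m₁ - m₂⟫ ≤ 0`. A type `S` of `l` yields such a decomposition, and then
`S = {α ∈ Δ | ⟪p, α⟫ = 0}`; conversely, `⟪p, m⟫ = 0` forces the coefficients of `m` to vanish off
this `S`.
-/

open scoped RealInnerProductSpace

section NonnegCone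

variable {V : Type*} [AddCommGroup V] [Module ℝ V]

noncomputable def nonnegCone (s : Finset V) : PointedCone ℝ V :=
  (PointedCone.positive ℝ (s → ℝ)).map (Fintype.linearCombination ℝ ((↑) : s → V))

lemma mem_nonnegCone {s : Finset V} {x : V} :
    x ∈ nonnegCone s ↔ ∃ c : V → ℝ, (∀ α, 0 ≤ c α) ∧ x = ∑ α ∈ s, c α • α := by
  classical
  simp only [nonnegCone, PointedCone.mem_map, PointedCone.mem_positive,
    Fintype.linearCombination_apply]
  constructor
  · rintro ⟨c, hc, rfl⟩
    refine ⟨fun v => if h : v ∈ s then c ⟨v, h⟩ else 0, fun v => ?_, ?_⟩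
    · dsimp only
      split_ifs
      exacts [hc _, le_rfl]
    · rw [← Finset.sum_coe_sort s]
      exact Finset.sum_congr rfl fun i _ => by simp only [dif_pos i.2]
  · rintro ⟨c, hc, rfl⟩
    exact ⟨fun i => c i, fun i => hc i, Finset.sum_coe_sort s fun α => c α • α⟩

lemma subset_nonnegCone (s : Finset V) : (s : Set V) ⊆ nonnegCone s := by
  classical
  intro α hα
  refine PointedCone.mem_map.2 ⟨Pi.single ⟨α, hα⟩ 1, ?_, ?_⟩
  · exact (PointedCone.mem_positive ℝ _).2 (Pi.single_nonneg.2 zero_le_one)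
  · rw [Fintype.linearCombination_apply_single, one_smul]

lemma isClosed_nonnegCone [TopologicalSpace V] [IsTopologicalAddGroup V] [ContinuousSMul ℝ V]
    [T2Space V] {s : Finset V} (hs : LinearIndependent ℝ ((↑) : s → V)) :
    IsClosed (nonnegCone s : Set V) := by
  have hf := LinearMap.isClosedEmbedding_of_injective
    (LinearMap.ker_eq_bot.2 hs.fintypeLinearCombination_injective)
  rw [nonnegCone, PointedCone.coe_map]
  exact hf.isClosedMap _ isClosed_Ici

end NonnegCone

section InnerProduct

variable {V : Type*} [NormedAddCommGroup V] [InnerProductSpace ℝ V]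

theorem PointedCone.exists_moreau_decomposition (K : PointedCone ℝ V)
    (hK : IsComplete (K : Set V)) (l : V) :
    ∃ m ∈ K, ⟪l + m, m⟫ = 0 ∧ ∀ w ∈ K, 0 ≤ ⟪l + m, w⟫ := by
  obtain ⟨m, hmK, hmin⟩ :=
    exists_norm_eq_iInf_of_complete_convex ⟨0, K.zero_mem⟩ hK K.convex (-l)
  have hobtuse : ∀ w ∈ K, 0 ≤ ⟪l + m, w - m⟫ := fun w hw => by
    have := (norm_eq_iInf_iff_real_inner_le_zero K.convex hmK).1 hmin w hw
    rwa [← neg_add', inner_neg_left, neg_nonpos] at this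
  have hm : ⟪l + m, m⟫ = 0 := by
    have h₀ := hobtuse 0 K.zero_mem
    have h₂ := hobtuse (2 • m) (K.smul_mem zero_le_two hmK)
    rw [zero_sub, inner_neg_right] at h₀
    rw [two_smul, add_sub_cancel_right] at h₂
    linarith
  refine ⟨m, hmK, hm, fun w hw => ?_⟩
  simpa [inner_sub_right, hm] using hobtuse w hw

theorem eq_of_sub_eq_sub_of_inner_nonneg {p₁ p₂ m₁ m₂ : V} (h : p₁ - m₁ = p₂ - m₂)
    (h₁ : ⟪p₁, m₁⟫ = 0) (h₂ : ⟪p₂, m₂⟫ = 0) (h₁₂ : 0 ≤ ⟪p₁, m₂⟫) (h₂₁ : 0 ≤ ⟪p₂, m₁⟫) :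
    p₁ = p₂ := by
  have hsub : p₁ - p₂ = m₁ - m₂ := sub_eq_sub_iff_sub_eq_sub.1 h
  have : ⟪p₁ - p₂, p₁ - p₂⟫ ≤ 0 := by
    nth_rewrite 2 [hsub]
    simp only [inner_sub_left, inner_sub_right, h₁, h₂]
    linarith
  exact sub_eq_zero.1 (real_inner_self_nonpos.1 this)

lemma inner_nonneg_of_mem_nonnegCone {s : Finset V} {p x : V} (hp : ∀ α ∈ s, 0 ≤ ⟪p, α⟫)
    (hx : x ∈ nonnegCone s) : 0 ≤ ⟪p, x⟫ := by
  obtain ⟨c, hc, rfl⟩ := mem_nonnegCone.1 hx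
  rw [inner_sum]
  exact Finset.sum_nonneg fun α hα => by
    rw [real_inner_smul_right]; exact mul_nonneg (hc α) (hp α hα)

def IsOfType (Δ S : Finset V) (l : V) : Prop :=
  S ⊆ Δ ∧ ∃ lp lm : V, l = lp - lm ∧ (∀ α ∈ S, ⟪lp, α⟫ = 0) ∧
    (∀ β ∈ Δ, β ∉ S → 0 < ⟪lp, β⟫) ∧ ∃ c : V → ℝ, (∀ α, 0 ≤ c α) ∧ lm = ∑ α ∈ S, c α • α

variable {Δ S : Finset V} {p m : V}

lemma isOfType_filter (hp : ∀ α ∈ Δ, 0 ≤ ⟪p, α⟫) (hm : m ∈ nonnegCone Δ) (hpm : ⟪p, m⟫ = 0) :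
    IsOfType Δ (Δ.filter (⟪p, ·⟫ = 0)) (p - m) := by
  obtain ⟨c, hc, rfl⟩ := mem_nonnegCone.1 hm
  have hterm : ∀ α ∈ Δ, c α * ⟪p, α⟫ = 0 := by
    refine (Finset.sum_eq_zero_iff_of_nonneg fun α hα => mul_nonneg (hc α) (hp α hα)).1 ?_
    simpa only [inner_sum, real_inner_smul_right] using hpm
  refine ⟨Finset.filter_subset _ _, p, _, rfl, fun α hα => (Finset.mem_filter.1 hα).2,
    fun β hβ hβS => (hp β hβ).lt_of_ne' fun h => hβS (Finset.mem_filter.2 ⟨hβ, h⟩), c, hc, ?_⟩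
  refine (Finset.sum_filter_of_ne fun α hα hne => ?_).symm
  exact (mul_eq_zero.1 (hterm α hα)).resolve_left (left_ne_zero_of_smul hne)

lemma IsOfType.eq_filter (h : IsOfType Δ S (p - m)) (hp : ∀ α ∈ Δ, 0 ≤ ⟪p, α⟫)
    (hm : m ∈ nonnegCone Δ) (hpm : ⟪p, m⟫ = 0) :
    S = Δ.filter (⟪p, ·⟫ = 0) := by
  obtain ⟨hSΔ, p', m', hl, hzero, hpos, c, hc, rfl⟩ := h
  have hp' : ∀ α ∈ Δ, 0 ≤ ⟪p', α⟫ := fun α hα => by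
    by_cases hαS : α ∈ S
    exacts [(hzero α hαS).ge, (hpos α hα hαS).le]
  have hp'm' : ⟪p', ∑ α ∈ S, c α • α⟫ = 0 := by
    simp only [inner_sum, real_inner_smul_right]
    exact Finset.sum_eq_zero fun α hα => by rw [hzero α hα, mul_zero]
  have hpp' : p' = p :=
    eq_of_sub_eq_sub_of_inner_nonneg hl.symm hp'm' hpm (inner_nonneg_of_mem_nonnegCone hp' hm)
      (inner_nonneg_of_mem_nonnegCone (fun α hα => hp α (hSΔ hα)) (mem_nonnegCone.2 ⟨c, hc, rfl⟩))
  subst hpp'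
  ext α
  simp only [Finset.mem_filter]
  exact ⟨fun hα => ⟨hSΔ hα, hzero α hα⟩, fun ⟨hαΔ, hα⟩ => by
    by_contra hαS; exact (hpos α hαΔ hαS).ne' hα⟩

end InnerProduct

theorem langlands_combinatorial_lemma_general
    {V : Type*} [NormedAddCommGroup V] [InnerProductSpace ℝ V] [FiniteDimensional ℝ V]
    (Δ : Finset V)
    (hind : LinearIndependent ℝ (fun α : Δ => (α : V)))
    (l : V) :
    ∃! S : Finset V, S ⊆ Δ ∧
      ∃ lp lm : V,
        l = lp - lm ∧
        (∀ α ∈ S, ⟪lp, α⟫ = 0) ∧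
        (∀ β ∈ Δ, β ∉ S → 0 < ⟪lp, β⟫) ∧
        ∃ c : V → ℝ, (∀ α, 0 ≤ c α) ∧ lm = ∑ α ∈ S, c α • α := by
  change ∃! S, IsOfType Δ S l
  obtain ⟨m, hm, hpm, hdual⟩ :=
    (nonnegCone Δ).exists_moreau_decomposition (isClosed_nonnegCone hind).isComplete l
  have hp : ∀ α ∈ Δ, 0 ≤ ⟪l + m, α⟫ := fun α hα => hdual α (subset_nonnegCone Δ hα)
  rw [← add_sub_cancel_right l m]
  exact ⟨_, isOfType_filter hp hm hpm, fun S hS => hS.eq_filter hp hm hpm⟩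

/-- **Langlands' combinatorial lemma.**
Let `V` be a finite-dimensional real inner product space and `Δ ⊆ V` a finite linearly
independent set with pairwise non-positive inner products.  Every `λ ∈ V` is "of type `S`"
for exactly one subset `S ⊆ Δ`, where `λ` is of type `S` if `λ = λ₊ - λ₋` with
`⟨λ₊, α⟩ = 0` for all `α ∈ S`, `⟨λ₊, β⟩ > 0` for all `β ∈ Δ \ S`, and `λ₋` a nonnegative
linear combination of the elements of `S`. -/
theorem langlands_combinatorial_lemma
    {V : Type*} [NormedAddCommGroup V] [InnerProductSpace ℝ V] [FiniteDimensional ℝ V]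
    (Δ : Finset V)
    (hind : LinearIndependent ℝ (fun α : Δ => (α : V)))
    (hnonpos : ∀ α ∈ Δ, ∀ β ∈ Δ, α ≠ β → ⟪α, β⟫ ≤ 0)
    (l : V) :
    ∃! S : Finset V, S ⊆ Δ ∧
      ∃ lp lm : V,
        l = lp - lm ∧
        (∀ α ∈ S, ⟪lp, α⟫ = 0) ∧
        (∀ β ∈ Δ, β ∉ S → 0 < ⟪lp, β⟫) ∧
        ∃ c : V → ℝ, (∀ α, 0 ≤ c α) ∧ lm = ∑ α ∈ S, c α • α :=
  langlands_combinatorial_lemma_general Δ hind l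
end

section
/- Let V be a finite-dimensional real inner product space and let θ : V → V be a linear involution that is an isometry (an orthogonal linear map with θ ∘ θ = id). Let N ⊆ V be a finite set such that α ∈ N implies −θ(α) ∈ N. Let λ, λ₁, λ₂ ∈ V satisfy λ = λ₁ + λ₂, θ(λ₁) = λ₁, ⟨λ₂, α⟩ ≥ 0 for all α ∈ N, and ⟨λ, α⟩ ≠ 0 for all α ∈ N. Then the number of elements α ∈ N with ⟨λ, α⟩ > 0 is at least ⌈(card N)/2⌉. -/
open scoped RealInnerProductSpace

/-- Lemma 5.6 of the paper (combinatorial content).  Let `V` be a finite-dimensional real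
inner product space, `θ` an orthogonal linear involution of `V`, and `N ⊆ V` a finite set
stable under `α ↦ -θ α`.  If `λ = λ₁ + λ₂` with `θ λ₁ = λ₁`, `⟨λ₂, α⟩ ≥ 0` for all `α ∈ N`,
and `⟨λ, α⟩ ≠ 0` for all `α ∈ N`, then `#{α ∈ N | ⟨λ, α⟩ > 0} ≥ ⌈(card N)/2⌉`. -/
theorem half_positive_pairing
    {V : Type*} [NormedAddCommGroup V] [InnerProductSpace ℝ V] [FiniteDimensional ℝ V]
    (θ : V →ₗ[ℝ] V)
    (hortho : ∀ u v : V, ⟪θ u, θ v⟫ = ⟪u, v⟫)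
    (hinvol : ∀ v : V, θ (θ v) = v)
    (N : Finset V)
    (hN : ∀ α ∈ N, -θ α ∈ N)
    (l l₁ l₂ : V)
    (hsum : l = l₁ + l₂)
    (hfix : θ l₁ = l₁)
    (hnonneg : ∀ α ∈ N, 0 ≤ ⟪l₂, α⟫)
    (hreg : ∀ α ∈ N, ⟪l, α⟫ ≠ 0) :
    ⌈(N.card : ℝ) / 2⌉ ≤ ({α ∈ N | 0 < ⟪l, α⟫} : Set V).ncard := by
  classical
  -- θ is self-adjoint
  have hsa : ∀ u v : V, ⟪θ u, v⟫ = ⟪u, θ v⟫ := by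
    intro u v
    conv_lhs => rw [← hinvol v]
    rw [hortho]
  set P : Finset V := N.filter (fun α => 0 < ⟪l, α⟫) with hP
  set Q : Finset V := N.filter (fun α => ⟪l, α⟫ < 0) with hQ
  -- the displayed set is ↑P
  have hset : ({α ∈ N | 0 < ⟪l, α⟫} : Set V) = ↑P := by
    ext x; simp [hP]
  rw [hset, Set.ncard_coe_finset]
  -- key: the involution maps Q into P
  have hkey : ∀ α ∈ Q, -θ α ∈ P := by
    intro α hα
    rw [hQ, Finset.mem_filter] at hα
    obtain ⟨hαN, hneg⟩ := hα
    have hmem : -θ α ∈ N := hN α hαN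
    rw [hP, Finset.mem_filter]
    refine ⟨hmem, ?_⟩
    have h1 : ⟪l₁, -θ α⟫ = -⟪l₁, α⟫ := by
      rw [inner_neg_right, ← hsa, hfix]
    have h2 : 0 ≤ ⟪l₂, -θ α⟫ := hnonneg _ hmem
    have h3 : ⟪l₁, α⟫ < 0 := by
      have := hnonneg α hαN
      have hl : ⟪l, α⟫ = ⟪l₁, α⟫ + ⟪l₂, α⟫ := by rw [hsum, inner_add_left]
      linarith [hl ▸ hneg]
    have hl' : ⟪l, -θ α⟫ = ⟪l₁, -θ α⟫ + ⟪l₂, -θ α⟫ := by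
      rw [hsum, inner_add_left]
    rw [hl', h1]
    linarith
  -- injectivity of α ↦ -θ α
  have hinj : Set.InjOn (fun α => -θ α) ↑Q := by
    intro a _ b _ hab
    simp only at hab
    have : θ a = θ b := by
      have := neg_injective hab
      exact this
    have := congrArg θ this
    rwa [hinvol, hinvol] at this
  have hQP : Q.card ≤ P.card := Finset.card_le_card_of_injOn _ hkey hinj
  -- N = P ∪ Q (disjoint)
  have hQeq : Q = N.filter (fun α => ¬ 0 < ⟪l, α⟫) := by
    apply Finset.filter_congr
    intro x hx
    have := hreg x hx
    constructor
    · intro h; linarith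
    · intro h
      rcases lt_trichotomy (⟪l, x⟫ : ℝ) 0 with h1 | h1 | h1
      · exact h1
      · exact absurd h1 this
      · exact absurd h1 h
  have hNsplit : N.card = P.card + Q.card := by
    rw [hP, hQeq]
    exact (Finset.card_filter_add_card_filter_not (p := fun α => 0 < ⟪l, α⟫)).symm
  rw [Int.ceil_le]
  push_cast
  rw [div_le_iff₀ (by norm_num : (0:ℝ) < 2)]
  have : (N.card : ℝ) = P.card + Q.card := by exact_mod_cast hNsplit
  have h2 : (Q.card : ℝ) ≤ P.card := by exact_mod_cast hQP
  linarith
end
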